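/- Let σ, λ > 0 with λ > σ, ω(x) = (σ√(2π))^{-1} exp(−(x²/2)(σ^{−2} − λ^{−2})) on ℝ, κ_a(x) = exp(−a|x|) with a > 0, r a positive integer, 1 ≤ q < p ≤ ∞, and α = r − 1/p + 1/q. Then FCTR(p,q,ω,κ_a) = (2α(σ^{−2}−λ^{−2})/(πa²))^{r/2} · ((α−r)/α)^{(α−r)/2} · exp(a²r²/(2α²(σ^{−2}−λ^{−2}))) · [1 + erf(ar/(α√(2(α−r)(σ^{−2}−λ^{−2}))))]^{α−r}. -/

import Mathlib

open MeasureTheory Real Set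
open scoped ENNReal

noncomputable def erf (z : ℝ) : ℝ := 2 / Real.sqrt π * ∫ t in (0:ℝ)..z, Real.exp (-t ^ 2)

/-! All three integrals are elementary. `κ_a ^ (1/α)` is a Laplace density and `ω ^ (1/α)` a
Gaussian; the integrand of `E_p^q` is `C * exp (-b x² + d |x|)` with `d = a r / (α β)`, and
completing the square turns its integral into a Gaussian integral over a half-line, i.e. an `erf`
term. Every factor of the resulting expression is positive, so the closed form is checked by
comparing logarithms, which reduces it to a polynomial identity once `α = r + β`. -/

lemma integral_exp_neg_mul_abs {k : ℝ} (hk : 0 < k) : ∫ x : ℝ, exp (-(k * |x|)) = 2 / k := by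
  rw [integral_comp_abs (f := fun y => exp (-(k * y))),
    integral_comp_mul_left_Ioi (fun y => exp (-y)) 0 hk]
  simp only [mul_zero, integral_exp_neg_Ioi_zero, smul_eq_mul, mul_one]
  field_simp

lemma setIntegral_Ioi_comp_sub_right {E : Type*} [NormedAddCommGroup E] [NormedSpace ℝ E]
    (f : ℝ → E) (c m : ℝ) : ∫ x in Ioi c, f (x - m) = ∫ x in Ioi (c - m), f x := by
  have := (measurePreserving_sub_right volume m).setIntegral_preimage_emb
    (measurableEmbedding_subRight m) f (Ioi (c - m))
  simpa [preimage_sub_const_Ioi] using this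

lemma intervalIntegral_gaussian_eq_erf {b : ℝ} (hb : 0 < b) (m : ℝ) :
    ∫ x in (0:ℝ)..m, exp (-b * x ^ 2) = √(π / b) / 2 * erf (√b * m) := by
  have hsb : √b ≠ 0 := by positivity
  have hsub : ∀ x : ℝ, exp (-b * x ^ 2) = exp (-(√b * x) ^ 2) := fun x => by
    rw [mul_pow, sq_sqrt hb.le, neg_mul]
  simp_rw [hsub]
  rw [intervalIntegral.integral_comp_mul_left (fun t => exp (-t ^ 2)) hsb, mul_zero, erf,
    sqrt_div' _ hb.le, smul_eq_mul]
  field_simp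

lemma integral_Ioi_neg_gaussian {b : ℝ} (hb : 0 < b) (m : ℝ) :
    ∫ x in Ioi (-m), exp (-b * x ^ 2) = √(π / b) / 2 * (1 + erf (√b * m)) := by
  have hint := integrable_exp_neg_mul_sq hb
  have hsymm : ∫ x in (-m)..0, exp (-b * x ^ 2) = ∫ x in (0:ℝ)..m, exp (-b * x ^ 2) := by
    have := intervalIntegral.integral_comp_neg (a := 0) (b := m) (fun x => exp (-b * x ^ 2))
    simp only [neg_sq, neg_zero] at this
    exact this.symm
  rw [← intervalIntegral.integral_interval_add_Ioi hint.integrableOn hint.integrableOn,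
    hsymm, intervalIntegral_gaussian_eq_erf hb, integral_gaussian_Ioi]
  ring

lemma integral_exp_neg_mul_sq_add_mul_abs {b : ℝ} (hb : 0 < b) (d : ℝ) :
    ∫ x : ℝ, exp (-(b * x ^ 2) + d * |x|)
      = exp (d ^ 2 / (4 * b)) * √(π / b) * (1 + erf (d / (2 * √b))) := by
  have hsq : ∀ y : ℝ, exp (-(b * y ^ 2) + d * y)
      = exp (d ^ 2 / (4 * b)) * exp (-b * (y - d / (2 * b)) ^ 2) := fun y => by
    rw [← exp_add]
    congr 1
    field_simp
    ring
  have herf : √b * (d / (2 * b)) = d / (2 * √b) := by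
    field_simp
    rw [sq_sqrt hb.le]
    ring
  have habs : (fun x : ℝ => exp (-(b * x ^ 2) + d * |x|))
      = fun x => (fun y => exp (-(b * y ^ 2) + d * y)) |x| := by
    simp only [sq_abs]
  rw [habs, integral_comp_abs (f := fun y => exp (-(b * y ^ 2) + d * y))]
  simp_rw [hsq]
  rw [integral_const_mul, setIntegral_Ioi_comp_sub_right (fun y => exp (-b * y ^ 2)),
    zero_sub, integral_Ioi_neg_gaussian hb, herf]
  ring

lemma erf_nonneg {z : ℝ} (hz : 0 ≤ z) : 0 ≤ erf z :=
  mul_nonneg (by positivity) (intervalIntegral.integral_nonneg hz fun _ _ => (exp_pos _).le)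

lemma integral_rpow_exp_neg_mul_abs {a s : ℝ} (ha : 0 < a) (hs : 0 < s) :
    ∫ x : ℝ, exp (-(a * |x|)) ^ s = 2 / (a * s) := by
  simp_rw [← exp_mul, show ∀ x : ℝ, -(a * |x|) * s = -(a * s * |x|) from fun x => by ring]
  exact integral_exp_neg_mul_abs (by positivity)

lemma integral_rpow_const_mul_gaussian {C : ℝ} (hC : 0 ≤ C) (c s : ℝ) :
    ∫ x : ℝ, (C * exp (-(x ^ 2 / 2) * c)) ^ s = C ^ s * √(π / (c * s / 2)) := by
  simp_rw [mul_rpow hC (exp_pos _).le, ← exp_mul,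
    show ∀ x : ℝ, -(x ^ 2 / 2) * c * s = -(c * s / 2) * x ^ 2 from fun x => by ring]
  rw [integral_const_mul, integral_gaussian]

lemma integral_rpow_exp_neg_mul_abs_mul_rpow_gaussian_div {a c C s t : ℝ} (hC : 0 ≤ C)
    (hct : 0 < c * t) :
    ∫ x : ℝ, exp (-(a * |x|)) ^ s * (C * exp (-(x ^ 2 / 2) * c) / exp (-(a * |x|))) ^ t
      = C ^ t * (exp ((a * (t - s)) ^ 2 / (4 * (c * t / 2))) * √(π / (c * t / 2))
          * (1 + erf (a * (t - s) / (2 * √(c * t / 2))))) := by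
  have hintegrand : ∀ x : ℝ,
      exp (-(a * |x|)) ^ s * (C * exp (-(x ^ 2 / 2) * c) / exp (-(a * |x|))) ^ t
        = C ^ t * exp (-(c * t / 2 * x ^ 2) + a * (t - s) * |x|) := fun x => by
    rw [mul_div_assoc, ← exp_sub, mul_rpow hC (exp_pos _).le, ← exp_mul, ← exp_mul,
      mul_left_comm, ← exp_add]
    ring_nf
  simp_rw [hintegrand]
  rw [integral_const_mul, integral_exp_neg_mul_sq_add_mul_abs (by positivity)]

lemma fctr_gaussian_laplace_closed_form {a c C E r α β : ℝ} (ha : 0 < a) (hc : 0 < c)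
    (hC : 0 < C) (hE : 0 < E) (hα : 0 < α) (hβ : 0 < β) (hαr : α = r + β) :
    (2 / (a * (1 / α))) ^ α / (C ^ (1 / α) * √(π / (c * (1 / α) / 2))) ^ α
      * (C ^ (1 / β) * (exp ((a * (1 / β - 1 / α)) ^ 2 / (4 * (c * (1 / β) / 2)))
          * √(π / (c * (1 / β) / 2)) * E) / (2 / (a * (1 / α)))) ^ β
      = (2 * α * c / (π * a ^ 2)) ^ (r / 2) * (β / α) ^ (β / 2)
          * exp (a ^ 2 * r ^ 2 / (2 * α ^ 2 * c)) * E ^ β := by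
  apply log_injOn_pos (mem_Ioi.2 (by positivity)) (mem_Ioi.2 (by positivity))
  simp (disch := positivity) only [log_mul, log_div, log_rpow, log_sqrt, log_exp, log_one,
    log_pow]
  rw [show r = α - β by linarith]
  field_simp
  ring

theorem stmt_12_general (σ lam a : ℝ) (hσ : 0 < σ) (hσlam : σ < lam)
    (ha : 0 < a) (r : ℕ) (hr : 0 < r) (p q : ℝ≥0∞) (hq1 : 1 ≤ q) (hqp : q < p)
    (α β : ℝ) (hα : α = r - (1 / p).toReal + (1 / q).toReal)
    (hβ : β = (1 / q).toReal - (1 / p).toReal)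
    (ω κ : ℝ → ℝ)
    (hω : ω = fun x : ℝ =>
      (σ * Real.sqrt (2 * π))⁻¹ * Real.exp (-(x ^ 2 / 2) * ((σ ^ 2)⁻¹ - (lam ^ 2)⁻¹)))
    (hκ : κ = fun x : ℝ => Real.exp (-(a * |x|))) :
    (∫ x : ℝ, κ x ^ (1 / α)) ^ α / (∫ x : ℝ, ω x ^ (1 / α)) ^ α
        * (∫ x : ℝ, κ x ^ (1 / α) / (∫ y : ℝ, κ y ^ (1 / α))
            * (ω x / κ x) ^ (1 / β)) ^ β
      = (2 * α * ((σ ^ 2)⁻¹ - (lam ^ 2)⁻¹) / (π * a ^ 2)) ^ ((r : ℝ) / 2)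
          * ((α - r) / α) ^ ((α - r) / 2)
          * Real.exp (a ^ 2 * r ^ 2 / (2 * α ^ 2 * ((σ ^ 2)⁻¹ - (lam ^ 2)⁻¹)))
          * (1 + erf (a * r
              / (α * Real.sqrt (2 * (α - r) * ((σ ^ 2)⁻¹ - (lam ^ 2)⁻¹))))) ^ (α - r) := by
  have hp : p ≠ 0 := (zero_le.trans_lt hqp).ne'
  have hq : q ≠ 0 := (zero_lt_one.trans_le hq1).ne'
  have hβ0 : 0 < β := by
    rw [hβ, sub_pos, ENNReal.toReal_lt_toReal (by simpa using hp) (by simpa using hq)]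
    simpa only [one_div] using ENNReal.inv_lt_inv.mpr hqp
  have hαr : α - r = β := by rw [hα, hβ]; ring
  have hα0 : 0 < α := by linarith [show (0 : ℝ) < r by exact_mod_cast hr]
  set c := (σ ^ 2)⁻¹ - (lam ^ 2)⁻¹
  have hc : 0 < c := sub_pos.2 (inv_strictAnti₀ (by positivity) (by gcongr))
  have hC : 0 < (σ * √(2 * π))⁻¹ := by positivity
  have herf :
      a * (1 / β - 1 / α) / (2 * √(c * (1 / β) / 2)) = a * r / (α * √(2 * β * c)) := by
    have hsqrt : √(c * (1 / β) / 2) = √(2 * β * c) / (2 * β) := by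
      rw [show c * (1 / β) / 2 = 2 * β * c / (2 * β) ^ 2 by field_simp,
        sqrt_div' _ (by positivity), sqrt_sq (by positivity)]
    rw [hsqrt, show (r : ℝ) = α - β by linarith]
    field_simp
  simp_rw [div_mul_eq_mul_div (κ _ ^ (1 / α)), integral_div]
  subst hω hκ
  rw [integral_rpow_exp_neg_mul_abs_mul_rpow_gaussian_div hC.le
      (mul_pos hc (one_div_pos.2 hβ0)), integral_rpow_exp_neg_mul_abs ha (one_div_pos.2 hα0),
    integral_rpow_const_mul_gaussian hC.le, hαr, herf]
  have hE : 0 < 1 + erf (a * r / (α * √(2 * β * c))) := by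
    linarith [erf_nonneg (by positivity : 0 ≤ a * r / (α * √(2 * β * c)))]
  exact fctr_gaussian_laplace_closed_form ha hc hC hE hα0 hβ0 (by linarith)

/-- Gaussian weights `ϱ(x) = (σ√(2π))⁻¹e^{−x²/(2σ²)}`,
`ψ(x) = e^{−x²/(2λ²)}` with `λ > σ > 0`, so
`ω(x) = (σ√(2π))⁻¹exp(−(x²/2)(σ⁻² − λ⁻²))`; quantizer `κ_a(x) = e^{−a|x|}`, `a > 0`;
`r ≥ 1`, `1 ≤ q < p ≤ ∞`, `α = r − 1/p + 1/q`, `β = 1/q − 1/p`.  Then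
`FCTR(p,q,ω,κ_a) = (‖κ_a^{1/α}‖₁^α/‖ω^{1/α}‖₁^α)·(∫_ℝ (κ_a^{1/α}/‖κ_a^{1/α}‖₁)(ω/κ_a)^{1/β})^β`
equals `(2α(σ⁻²−λ⁻²)/(πa²))^{r/2}((α−r)/α)^{(α−r)/2} exp(a²r²/(2α²(σ⁻²−λ⁻²)))
[1 + erf(ar/(α√(2(α−r)(σ⁻²−λ⁻²))))]^{α−r}`. -/
theorem stmt_12 (σ lam a : ℝ) (hσ : 0 < σ) (hlam : 0 < lam) (hσlam : σ < lam)
    (ha : 0 < a) (r : ℕ) (hr : 0 < r) (p q : ℝ≥0∞) (hq1 : 1 ≤ q) (hqp : q < p)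
    (α β : ℝ) (hα : α = r - (1 / p).toReal + (1 / q).toReal)
    (hβ : β = (1 / q).toReal - (1 / p).toReal)
    (ω κ : ℝ → ℝ)
    (hω : ω = fun x : ℝ =>
      (σ * Real.sqrt (2 * π))⁻¹ * Real.exp (-(x ^ 2 / 2) * ((σ ^ 2)⁻¹ - (lam ^ 2)⁻¹)))
    (hκ : κ = fun x : ℝ => Real.exp (-(a * |x|))) :
    (∫ x : ℝ, κ x ^ (1 / α)) ^ α / (∫ x : ℝ, ω x ^ (1 / α)) ^ α
        * (∫ x : ℝ, κ x ^ (1 / α) / (∫ y : ℝ, κ y ^ (1 / α))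
            * (ω x / κ x) ^ (1 / β)) ^ β
      = (2 * α * ((σ ^ 2)⁻¹ - (lam ^ 2)⁻¹) / (π * a ^ 2)) ^ ((r : ℝ) / 2)
          * ((α - r) / α) ^ ((α - r) / 2)
          * Real.exp (a ^ 2 * r ^ 2 / (2 * α ^ 2 * ((σ ^ 2)⁻¹ - (lam ^ 2)⁻¹)))
          * (1 + erf (a * r
              / (α * Real.sqrt (2 * (α - r) * ((σ ^ 2)⁻¹ - (lam ^ 2)⁻¹))))) ^ (α - r) :=
  stmt_12_general σ lam a hσ hσlam ha r hr p q hq1 hqp α β hα hβ ω κ hω hκ
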